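/- arXiv:2410.17215 — 2 statements merged into one kernel-verified Lean document; each statement's English description precedes it below -/
import Mathlib

section
/- Let S be a finite sample space, p a probability distribution with p(x) > 0 for all x in S, and r : S → ℝ an injective function. Let X₁,...,X_N be i.i.d. random variables with distribution p, and x ∈ S. Then P(argmax over n ≤ N of r(X_n) equals x, i.e., the maximum of r(X_n) is attained uniquely at value r(x) with some X_n = x) = P_X(x)^N − (P_X(x) − p(x))^N, where P_X(x) = P(r(X₁) ≤ r(x)). -/
open scoped Classical BigOperators
open Filter

lemma aux_pow {S : Type*} [Fintype S] (p : S → ℝ) (N : ℕ) (Q : S → Prop)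
    [DecidablePred Q] :
    (∑ f : Fin N → S, if ∀ n, Q (f n) then ∏ i, p (f i) else 0)
      = (∑ y : S, if Q y then p y else 0) ^ N := by
  classical
  have h : (∑ y : S, if Q y then p y else 0) ^ N
      = ∏ _i : Fin N, ∑ y : S, if Q y then p y else 0 := by
    simp [Finset.prod_const]
  rw [h, Finset.prod_univ_sum]
  rw [Fintype.piFinset_univ]
  refine Finset.sum_congr rfl fun f _ => ?_
  by_cases hf : ∀ n, Q (f n)
  · simp [hf]
  · push_neg at hf
    obtain ⟨i, hi⟩ := hf
    rw [if_neg (by push_neg; exact ⟨i, hi⟩), Finset.prod_eq_zero (Finset.mem_univ i)]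
    simp [hi]

/-- Probability that the maximum of `r (X n)` over an i.i.d. sample is attained
(at value `r x`) with some coordinate equal to `x`:
`P_X(x)^N - (P_X(x) - p(x))^N`. -/
theorem stmt_0 {S : Type*} [Fintype S] (p : S → ℝ) (hp : ∀ x, 0 < p x)
    (hsum : ∑ x, p x = 1) (r : S → ℝ) (hr : Function.Injective r)
    (N : ℕ) (x : S) :
    (∑ f : Fin N → S,
        if (∀ n, r (f n) ≤ r x) ∧ (∃ n, f n = x) then ∏ i, p (f i) else 0)
      = (∑ y : S, if r y ≤ r x then p y else 0) ^ N
        - ((∑ y : S, if r y ≤ r x then p y else 0) - p x) ^ N := by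
  classical
  have h1 : (∑ y : S, if r y ≤ r x then p y else 0) - p x
      = ∑ y : S, if r y ≤ r x ∧ y ≠ x then p y else 0 := by
    have : (∑ y : S, if r y ≤ r x then p y else 0)
        - (∑ y : S, if r y ≤ r x ∧ y ≠ x then p y else 0)
        = ∑ y : S, ((if r y ≤ r x then p y else 0)
            - (if r y ≤ r x ∧ y ≠ x then p y else 0)) := by
      rw [Finset.sum_sub_distrib]
    have h2 : ∑ y : S, ((if r y ≤ r x then p y else 0)
        - (if r y ≤ r x ∧ y ≠ x then p y else 0))
        = ∑ y : S, (if y = x then p x else 0) := by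
      refine Finset.sum_congr rfl fun y _ => ?_
      by_cases hy : y = x
      · subst hy; simp
      · by_cases hle : r y ≤ r x <;> simp [hy, hle]
    have h3 : (∑ y : S, (if y = x then p x else 0)) = p x := by
      simp
    linarith [this, h2.trans h3]
  rw [h1]
  rw [← aux_pow p N (fun y => r y ≤ r x), ← aux_pow p N (fun y => r y ≤ r x ∧ y ≠ x)]
  rw [← Finset.sum_sub_distrib]
  refine Finset.sum_congr rfl fun f _ => ?_
  by_cases hA : ∀ n, r (f n) ≤ r x
  · by_cases hE : ∃ n, f n = x
    · obtain ⟨n, hn⟩ := hE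
      have hne : ¬ ∀ n, ¬ f n = x := fun h => h n hn
      simp [hA, hne, (⟨n, hn⟩ : ∃ m, f m = x)]
    · push_neg at hE
      have : ∀ n, r (f n) ≤ r x ∧ f n ≠ x := fun n => ⟨hA n, hE n⟩
      simp [hA, hE, this]
  · have : ¬ ∀ n, r (f n) ≤ r x ∧ f n ≠ x := fun h => hA fun n => (h n).1
    simp [hA, this]
end

section
/- Let S be finite, p₁, p₂ strictly positive probability mass functions on S, r injective, and x* = argmax_{x∈S} r(x). Then lim_{N,M→∞} ∑_{x∈S} P_X(x)^N · P_Y(x)^M · [1 − (1 − p₁(x)/P_X(x))^N] · [1 − (1 − p₂(x)/P_Y(x))^M] = 1, where P_X(x) = ∑_{y: r(y) ≤ r(x)} p₁(y) and P_Y(x) = ∑_{y: r(y) ≤ r(x)} p₂(y). -/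
open scoped Classical BigOperators
open Filter

/-- The sum over `x` of
`P_X(x)^N P_Y(x)^M (1-(1-p₁ x/P_X x)^N)(1-(1-p₂ x/P_Y x)^M)` tends to `1`
as `N, M → ∞`. -/
theorem stmt_12 {S : Type*} [Fintype S] [Nonempty S]
    (p₁ p₂ : S → ℝ) (hp₁ : ∀ x, 0 < p₁ x) (hp₂ : ∀ x, 0 < p₂ x)
    (hsum₁ : ∑ x, p₁ x = 1) (hsum₂ : ∑ x, p₂ x = 1)
    (r : S → ℝ) (hr : Function.Injective r)
    (xstar : S) (hstar : ∀ y, r y ≤ r xstar) :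
    Tendsto (fun NM : ℕ × ℕ =>
        ∑ x : S,
          (∑ y : S, if r y ≤ r x then p₁ y else 0) ^ NM.1 *
          (∑ y : S, if r y ≤ r x then p₂ y else 0) ^ NM.2 *
          (1 - (1 - p₁ x / (∑ y : S, if r y ≤ r x then p₁ y else 0)) ^ NM.1) *
          (1 - (1 - p₂ x / (∑ y : S, if r y ≤ r x then p₂ y else 0)) ^ NM.2))
      atTop (nhds 1) := by
  -- generic facts about partial sums
  have hge : ∀ (p : S → ℝ), (∀ x, 0 < p x) → ∀ x : S,
      p x ≤ ∑ y : S, if r y ≤ r x then p y else 0 := by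
    intro p hp x
    have h := Finset.single_le_sum (f := fun y => if r y ≤ r x then p y else 0)
      (fun y _ => by by_cases h : r y ≤ r x <;> simp [h, (hp y).le]) (Finset.mem_univ x)
    simpa using h
  have hle1 : ∀ (p : S → ℝ), (∀ x, 0 < p x) → (∑ x, p x = 1) → ∀ x : S,
      (∑ y : S, if r y ≤ r x then p y else 0) ≤ 1 := by
    intro p hp hsum x
    calc (∑ y : S, if r y ≤ r x then p y else 0) ≤ ∑ y : S, p y := by
          apply Finset.sum_le_sum
          intro y _
          split_ifs with h
          exacts [le_rfl, (hp y).le]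
      _ = 1 := hsum
  have hlt1 : ∀ (p : S → ℝ), (∀ x, 0 < p x) → (∑ x, p x = 1) → ∀ x : S, x ≠ xstar →
      (∑ y : S, if r y ≤ r x then p y else 0) < 1 := by
    intro p hp hsum x hx
    have hrx : ¬ (r xstar ≤ r x) := by
      intro h
      exact hx (hr (le_antisymm (hstar x) h))
    have : (∑ y : S, if r y ≤ r x then p y else 0) < ∑ y : S, p y := by
      apply Finset.sum_lt_sum
      · intro y _
        split_ifs with h
        exacts [le_rfl, (hp y).le]
      · exact ⟨xstar, Finset.mem_univ _, by simp [hrx, hp xstar]⟩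
    linarith [this, hsum ▸ this]
  have hstar1 : (∑ y : S, if r y ≤ r xstar then p₁ y else 0) = 1 := by
    rw [Finset.sum_congr rfl fun y _ => if_pos (hstar y)]; exact hsum₁
  have hstar2 : (∑ y : S, if r y ≤ r xstar then p₂ y else 0) = 1 := by
    rw [Finset.sum_congr rfl fun y _ => if_pos (hstar y)]; exact hsum₂
  -- the limit of each summand
  have key : Tendsto (fun NM : ℕ × ℕ =>
        ∑ x : S,
          (∑ y : S, if r y ≤ r x then p₁ y else 0) ^ NM.1 *
          (∑ y : S, if r y ≤ r x then p₂ y else 0) ^ NM.2 *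
          (1 - (1 - p₁ x / (∑ y : S, if r y ≤ r x then p₁ y else 0)) ^ NM.1) *
          (1 - (1 - p₂ x / (∑ y : S, if r y ≤ r x then p₂ y else 0)) ^ NM.2))
      atTop (nhds (∑ x : S, if x = xstar then (1:ℝ) else 0)) := by
    apply tendsto_finset_sum
    intro x _
    by_cases hx : x = xstar
    · subst hx
      simp only [hstar1, hstar2, one_pow, one_mul, div_one, if_pos rfl]
      have hp1le : p₁ x ≤ 1 := hstar1 ▸ hge p₁ hp₁ x
      have hp2le : p₂ x ≤ 1 := hstar2 ▸ hge p₂ hp₂ x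
      have h1 : Tendsto (fun NM : ℕ × ℕ => (1 - p₁ x) ^ NM.1) atTop (nhds 0) := by
        have e0 : (0:ℝ) ≤ 1 - p₁ x := by linarith
        have e1 : (1:ℝ) - p₁ x < 1 := by linarith [hp₁ x]
        have := tendsto_pow_atTop_nhds_zero_of_lt_one e0 e1
        rw [← prod_atTop_atTop_eq]
        exact this.comp tendsto_fst
      have h2 : Tendsto (fun NM : ℕ × ℕ => (1 - p₂ x) ^ NM.2) atTop (nhds 0) := by
        have e0 : (0:ℝ) ≤ 1 - p₂ x := by linarith
        have e1 : (1:ℝ) - p₂ x < 1 := by linarith [hp₂ x]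
        have := tendsto_pow_atTop_nhds_zero_of_lt_one e0 e1
        rw [← prod_atTop_atTop_eq]
        exact this.comp tendsto_snd
      have hc1 : Tendsto (fun _ : ℕ × ℕ => (1:ℝ)) atTop (nhds 1) := tendsto_const_nhds
      have := (hc1.sub h1).mul (hc1.sub h2)
      simpa using this
    · simp only [if_neg hx]
      set PX := ∑ y : S, if r y ≤ r x then p₁ y else 0 with hPXdef
      set PY := ∑ y : S, if r y ≤ r x then p₂ y else 0 with hPYdef
      have hPX0 : 0 < PX := lt_of_lt_of_le (hp₁ x) (hge p₁ hp₁ x)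
      have hPY0 : 0 < PY := lt_of_lt_of_le (hp₂ x) (hge p₂ hp₂ x)
      have hPX1 : PX < 1 := hlt1 p₁ hp₁ hsum₁ x hx
      have hPY1 : PY ≤ 1 := hle1 p₂ hp₂ hsum₂ x
      have hq1 : 0 ≤ 1 - p₁ x / PX := by
        have : p₁ x / PX ≤ 1 := (div_le_one hPX0).2 (hge p₁ hp₁ x)
        linarith
      have hq1' : 1 - p₁ x / PX ≤ 1 := by
        have : 0 ≤ p₁ x / PX := div_nonneg (hp₁ x).le hPX0.le
        linarith
      have hq2 : 0 ≤ 1 - p₂ x / PY := by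
        have : p₂ x / PY ≤ 1 := (div_le_one hPY0).2 (hge p₂ hp₂ x)
        linarith
      have hq2' : 1 - p₂ x / PY ≤ 1 := by
        have : 0 ≤ p₂ x / PY := div_nonneg (hp₂ x).le hPY0.le
        linarith
      apply squeeze_zero (g := fun NM : ℕ × ℕ => PX ^ NM.1)
      · intro NM
        have ha : 0 ≤ 1 - (1 - p₁ x / PX) ^ NM.1 := by
          have := pow_le_one₀ hq1 hq1' (n := NM.1)
          linarith
        have hb : 0 ≤ 1 - (1 - p₂ x / PY) ^ NM.2 := by
          have := pow_le_one₀ hq2 hq2' (n := NM.2)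
          linarith
        positivity
      · intro NM
        have ha1 : 1 - (1 - p₁ x / PX) ^ NM.1 ≤ 1 := by
          have := pow_nonneg hq1 NM.1; linarith
        have ha0 : 0 ≤ 1 - (1 - p₁ x / PX) ^ NM.1 := by
          have := pow_le_one₀ hq1 hq1' (n := NM.1); linarith
        have hb1 : 1 - (1 - p₂ x / PY) ^ NM.2 ≤ 1 := by
          have := pow_nonneg hq2 NM.2; linarith
        have hb0 : 0 ≤ 1 - (1 - p₂ x / PY) ^ NM.2 := by
          have := pow_le_one₀ hq2 hq2' (n := NM.2); linarith
        have hPYpow1 : PY ^ NM.2 ≤ 1 := pow_le_one₀ hPY0.le hPY1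
        have hPYpow0 : 0 ≤ PY ^ NM.2 := pow_nonneg hPY0.le NM.2
        calc PX ^ NM.1 * PY ^ NM.2 * (1 - (1 - p₁ x / PX) ^ NM.1) *
              (1 - (1 - p₂ x / PY) ^ NM.2)
            = PX ^ NM.1 * (PY ^ NM.2 * (1 - (1 - p₁ x / PX) ^ NM.1) *
              (1 - (1 - p₂ x / PY) ^ NM.2)) := by ring
          _ ≤ PX ^ NM.1 * 1 := by
              apply mul_le_mul_of_nonneg_left _ (pow_nonneg hPX0.le NM.1)
              exact mul_le_one₀ (mul_le_one₀ hPYpow1 ha0 ha1) hb0 hb1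
          _ = PX ^ NM.1 := mul_one _
      · have := tendsto_pow_atTop_nhds_zero_of_lt_one hPX0.le hPX1
        rw [← prod_atTop_atTop_eq]
        exact this.comp tendsto_fst
  simpa using key
end
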